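/- Let f_* : C_* → D_* be a chain map of finite Hilbert chain complexes such that C_* and D_* are contractible (chain homotopy equivalent to the zero complex) and f_n is bijective for each n ∈ ℤ. Then ρ(D_*) − ρ(C_*) = Σ_{n ∈ ℤ} (-1)^n · ln(det⊥(f_n)). -/

import Mathlib

/-- `det⊥(f)`: for a linear map `f : V → W` of finite-dimensional real inner product
spaces, `detPerp f = 1` if `f = 0`, and otherwise it is the square root of the determinant
of the endomorphism of the orthogonal complement of `ker (f* ∘ f)` induced by `f* ∘ f`. -/
noncomputable def detPerp {V W : Type*} [NormedAddCommGroup V] [InnerProductSpace ℝ V]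
    [NormedAddCommGroup W] [InnerProductSpace ℝ W]
    [FiniteDimensional ℝ V] [FiniteDimensional ℝ W] (f : V →ₗ[ℝ] W) : ℝ :=
  letI := Classical.propDecidable (f = 0)
  if f = 0 then 1
  else Real.sqrt (LinearMap.det
    ((Submodule.orthogonalProjectionOnto (LinearMap.ker (LinearMap.adjoint f ∘ₗ f))ᗮ).toLinearMap
      ∘ₗ (LinearMap.adjoint f ∘ₗ f)
      ∘ₗ (LinearMap.ker (LinearMap.adjoint f ∘ₗ f))ᗮ.subtype))

/-!
`det⊥ f` is Mathlib's volume factor `LinearMap.normDet` (`= √det (g* g)`) of `f` restricted to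
`(ker f)ᗮ`. Fix `n` and split `C_n = ker c_n ⊕ (ker c_n)ᗮ`, `D_n = ker d_n ⊕ (ker d_n)ᗮ`.
As `f` is a chain isomorphism, `f_n` maps `ker c_n` onto `ker d_n`, so in adapted orthonormal
bases `f_n` is block upper triangular and `det⊥ f_n = a_n b_n`, where `a_n` is the volume factor
of `f_n` on `ker c_n` and `b_n` that of the compressed map `(ker c_n)ᗮ → (ker d_n)ᗮ`. Restricting
`d_n ∘ f_n = f_{n-1} ∘ c_n` to `(ker c_n)ᗮ` and using exactness `im c_n = ker c_{n-1}` (a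
consequence of the contraction) gives `det⊥ d_n · b_n = a_{n-1} · det⊥ c_n`. After taking
logarithms, the alternating sums telescope.
-/

open LinearMap Submodule Module Real

theorem LinearMap.map_ker_eq_ker_of_comp_eq {R M₁ M₀ N₁ N₀ : Type*} [Ring R]
    [AddCommGroup M₁] [Module R M₁] [AddCommGroup M₀] [Module R M₀]
    [AddCommGroup N₁] [Module R N₁] [AddCommGroup N₀] [Module R N₀]
    {c : M₁ →ₗ[R] M₀} {d : N₁ →ₗ[R] N₀} {f₁ : M₁ →ₗ[R] N₁} {f₀ : M₀ →ₗ[R] N₀}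
    (hsq : d ∘ₗ f₁ = f₀ ∘ₗ c) (hf₁ : Function.Surjective f₁) (hf₀ : Function.Injective f₀) :
    (ker c).map f₁ = ker d := by
  have hker : ker c = (ker d).comap f₁ := by
    rw [← ker_comp, hsq, ker_comp, ker_eq_bot.mpr hf₀, comap_bot]
  rw [hker, map_comap_eq_of_surjective hf₁]

theorem LinearMap.range_eq_ker_of_id_eq_add {R M₂ M₁ M₀ : Type*} [Ring R]
    [AddCommGroup M₂] [Module R M₂] [AddCommGroup M₁] [Module R M₁] [AddCommGroup M₀] [Module R M₀]
    {c₂ : M₂ →ₗ[R] M₁} {c₁ : M₁ →ₗ[R] M₀} {s₁ : M₁ →ₗ[R] M₂} {s₀ : M₀ →ₗ[R] M₁}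
    (hcc : c₁ ∘ₗ c₂ = 0) (hs : LinearMap.id = c₂ ∘ₗ s₁ + s₀ ∘ₗ c₁) :
    range c₂ = ker c₁ :=
  le_antisymm (range_le_ker_iff.mpr hcc) fun x hx =>
    ⟨s₁ x, by simpa [mem_ker.mp hx] using congr($hs x).symm⟩

section InnerProductSpace

variable {𝕜 V W : Type*} [RCLike 𝕜]
  [NormedAddCommGroup V] [InnerProductSpace 𝕜 V] [NormedAddCommGroup W] [InnerProductSpace 𝕜 W]

theorem LinearMap.toMatrix_orthonormalBasis_apply {ι ι' : Type*} [Fintype ι] [DecidableEq ι]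
    [Fintype ι'] (b : OrthonormalBasis ι 𝕜 V) (b' : OrthonormalBasis ι' 𝕜 W) (g : V →ₗ[𝕜] W)
    (i : ι') (j : ι) :
    toMatrix b.toBasis b'.toBasis g i j = inner 𝕜 (b' i) (g (b j)) := by
  simp [LinearMap.toMatrix_apply, OrthonormalBasis.repr_apply_apply]

theorem LinearMap.ker_comp_subtype_orthogonal_ker (f : V →ₗ[𝕜] W) :
    ker (f ∘ₗ (ker f)ᗮ.subtype) = ⊥ := by
  rw [ker_comp, ← disjoint_iff_comap_eq_bot]
  exact (orthogonal_disjoint _).symm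

variable [FiniteDimensional 𝕜 V]

theorem LinearMap.finrank_orthogonal_ker (f : V →ₗ[𝕜] W) :
    finrank 𝕜 (ker f)ᗮ = finrank 𝕜 (range f) := by
  have := f.finrank_range_add_finrank_ker
  have := (ker f).finrank_add_finrank_orthogonal
  omega

theorem Submodule.adjoint_subtype (K : Submodule 𝕜 V) :
    adjoint K.subtype = K.orthogonalProjectionOnto.toLinearMap := by
  symm
  rw [eq_adjoint_iff]
  intro x y
  simp

noncomputable def OrthonormalBasis.sumOrthogonal {ι₁ ι₂ : Type*} [Fintype ι₁] [Fintype ι₂]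
    {K : Submodule 𝕜 V} (b₁ : OrthonormalBasis ι₁ 𝕜 K) (b₂ : OrthonormalBasis ι₂ 𝕜 Kᗮ) :
    OrthonormalBasis (ι₁ ⊕ ι₂) 𝕜 V :=
  ((b₁.toBasis.prod b₂.toBasis).map (K.prodEquivOfIsCompl Kᗮ K.isCompl_orthogonal))
    |>.toOrthonormalBasis <| by
      classical
      rw [orthonormal_iff_ite]
      rintro (i | i) (j | j) <;>
        simp [coe_prodEquivOfIsCompl', inner_right_of_mem_orthogonal (b₁ _).2 (b₂ _).2,
          inner_left_of_mem_orthogonal (b₁ _).2 (b₂ _).2, ← Submodule.coe_inner,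
          b₁.inner_eq_ite, b₂.inner_eq_ite]

section SumOrthogonal

variable {ι₁ ι₂ : Type*} [Fintype ι₁] [Fintype ι₂] {K : Submodule 𝕜 V}
  (b₁ : OrthonormalBasis ι₁ 𝕜 K) (b₂ : OrthonormalBasis ι₂ 𝕜 Kᗮ)

@[simp]
theorem OrthonormalBasis.sumOrthogonal_inl (i : ι₁) : b₁.sumOrthogonal b₂ (.inl i) = b₁ i := by
  simp [sumOrthogonal, coe_prodEquivOfIsCompl']

@[simp]
theorem OrthonormalBasis.sumOrthogonal_inr (i : ι₂) : b₁.sumOrthogonal b₂ (.inr i) = b₂ i := by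
  simp [sumOrthogonal, coe_prodEquivOfIsCompl']

end SumOrthogonal

variable [FiniteDimensional 𝕜 W]

theorem LinearMap.normDet_eq_mul_normDet_orthogonal (g : V →ₗ[𝕜] W) (hg : Function.Bijective g)
    {K : Submodule 𝕜 V} {K' : Submodule 𝕜 W} (hK : K.map g = K') :
    g.normDet = (g ∘ₗ K.subtype).normDet
      * (K'ᗮ.orthogonalProjectionOnto.toLinearMap ∘ₗ g ∘ₗ Kᗮ.subtype).normDet := by
  subst hK
  have hrank : finrank 𝕜 K = finrank 𝕜 (K.map g) :=
    (K.equivMapOfInjective g hg.injective).finrank_eq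
  have hrank' : finrank 𝕜 Kᗮ = finrank 𝕜 (K.map g)ᗮ := by
    have := (LinearEquiv.ofBijective g hg).finrank_eq
    have := K.finrank_add_finrank_orthogonal
    have := (K.map g).finrank_add_finrank_orthogonal
    omega
  let b₁ := stdOrthonormalBasis 𝕜 K
  let b₂ := stdOrthonormalBasis 𝕜 Kᗮ
  let b₁' := (stdOrthonormalBasis 𝕜 (K.map g)).reindex (finCongr hrank.symm)
  let b₂' := (stdOrthonormalBasis 𝕜 (K.map g)ᗮ).reindex (finCongr hrank'.symm)
  let gK := (g ∘ₗ K.subtype).codRestrict (K.map g) fun x => mem_map_of_mem x.2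
  set M := toMatrix (b₁.sumOrthogonal b₂).toBasis (b₁'.sumOrthogonal b₂').toBasis g with hM
  have h₁₁ : M.toBlocks₁₁ = toMatrix b₁.toBasis b₁'.toBasis gK := by
    ext i j
    simp [M, gK, Matrix.toBlocks₁₁, toMatrix_orthonormalBasis_apply]
  have h₂₁ : M.toBlocks₂₁ = 0 := by
    ext i j
    simpa [M, Matrix.toBlocks₂₁, toMatrix_orthonormalBasis_apply] using
      inner_left_of_mem_orthogonal (mem_map_of_mem (b₁ j).2) (b₂' i).2
  have h₂₂ : M.toBlocks₂₂ = toMatrix b₂.toBasis b₂'.toBasis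
      ((K.map g)ᗮ.orthogonalProjectionOnto.toLinearMap ∘ₗ g ∘ₗ Kᗮ.subtype) := by
    ext i j
    simp [M, Matrix.toBlocks₂₂, toMatrix_orthonormalBasis_apply]
  rw [normDet_eq_norm_det_toMatrix g (b₁.sumOrthogonal b₂) (b₁'.sumOrthogonal b₂'),
    ← hM, ← Matrix.fromBlocks_toBlocks M, h₁₁, h₂₁, h₂₂, Matrix.det_fromBlocks_zero₂₁, norm_mul,
    ← normDet_eq_norm_det_toMatrix, ← normDet_eq_norm_det_toMatrix, normDet_codRestrict]

end InnerProductSpace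

section DetPerp

variable {V W : Type*}
  [NormedAddCommGroup V] [InnerProductSpace ℝ V] [FiniteDimensional ℝ V]
  [NormedAddCommGroup W] [InnerProductSpace ℝ W]

theorem LinearMap.apply_orthogonalProjectionOnto_orthogonal_ker (f : V →ₗ[ℝ] W) (v : V) :
    f ((ker f)ᗮ.orthogonalProjectionOnto v) = f v := by
  have h := (ker f)ᗮ.sub_starProjection_mem_orthogonal v
  rw [orthogonal_orthogonal, mem_ker, map_sub, sub_eq_zero] at h
  exact h.symm

variable [FiniteDimensional ℝ W]

theorem LinearMap.normDet_comp_subtype (f : V →ₗ[ℝ] W) (K : Submodule ℝ V) :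
    (f ∘ₗ K.subtype).normDet
      = √(LinearMap.det (K.orthogonalProjectionOnto.toLinearMap ∘ₗ (adjoint f ∘ₗ f) ∘ₗ K.subtype)) := by
  have hgram : adjoint (f ∘ₗ K.subtype) ∘ₗ (f ∘ₗ K.subtype)
      = K.orthogonalProjectionOnto.toLinearMap ∘ₗ (adjoint f ∘ₗ f) ∘ₗ K.subtype := by
    rw [adjoint_comp, adjoint_subtype]
    simp only [comp_assoc]
  rw [← hgram, ← normDet_sq, RCLike.ofReal_real_eq_id, id_eq, sqrt_sq (normDet_nonneg _)]

theorem detPerp_eq_normDet (f : V →ₗ[ℝ] W) :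
    detPerp f = (f ∘ₗ (ker f)ᗮ.subtype).normDet := by
  unfold detPerp
  split_ifs with hf
  · subst hf
    rw [ker_zero, top_orthogonal_eq_bot, normDet_of_subsingleton]
  · rw [← normDet_comp_subtype, ker_adjoint_comp_self]

theorem detPerp_pos (f : V →ₗ[ℝ] W) : 0 < detPerp f := by
  rw [detPerp_eq_normDet]
  exact (normDet_nonneg _).lt_of_ne' <|
    normDet_eq_zero_iff_ker_ne_bot.not_left.mpr f.ker_comp_subtype_orthogonal_ker

theorem detPerp_of_subsingleton [Subsingleton V] (f : V →ₗ[ℝ] W) : detPerp f = 1 := by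
  rw [detPerp_eq_normDet, normDet_of_subsingleton]

theorem detPerp_of_injective {f : V →ₗ[ℝ] W} (hf : Function.Injective f) :
    detPerp f = f.normDet := by
  rw [detPerp_eq_normDet, ker_eq_bot.mpr hf, bot_orthogonal_eq_top,
    normDet_comp_of_finrank_eq _ _ (finrank_top ℝ V), normDet_subtype, mul_one]

end DetPerp

section Square

variable {V₁ V₀ W₁ W₀ : Type*}
  [NormedAddCommGroup V₁] [InnerProductSpace ℝ V₁] [FiniteDimensional ℝ V₁]
  [NormedAddCommGroup V₀] [InnerProductSpace ℝ V₀] [FiniteDimensional ℝ V₀]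
  [NormedAddCommGroup W₁] [InnerProductSpace ℝ W₁] [FiniteDimensional ℝ W₁]
  [NormedAddCommGroup W₀] [InnerProductSpace ℝ W₀] [FiniteDimensional ℝ W₀]
  {c : V₁ →ₗ[ℝ] V₀} {d : W₁ →ₗ[ℝ] W₀} {f₁ : V₁ →ₗ[ℝ] W₁} {f₀ : V₀ →ₗ[ℝ] W₀}

theorem detPerp_mul_normDet_eq_normDet_mul_detPerp (hsq : d ∘ₗ f₁ = f₀ ∘ₗ c)
    (hf₁ : Function.Bijective f₁) (hf₀ : Function.Injective f₀) {K : Submodule ℝ V₀}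
    (hK : range c = K) :
    detPerp d * ((ker d)ᗮ.orthogonalProjectionOnto.toLinearMap ∘ₗ f₁ ∘ₗ (ker c)ᗮ.subtype).normDet
      = (f₀ ∘ₗ K.subtype).normDet * detPerp c := by
  subst hK
  let c' := (c ∘ₗ (ker c)ᗮ.subtype).codRestrict (range c) fun x => mem_range_self c x
  have hfactor : (d ∘ₗ (ker d)ᗮ.subtype)
        ∘ₗ ((ker d)ᗮ.orthogonalProjectionOnto.toLinearMap ∘ₗ f₁ ∘ₗ (ker c)ᗮ.subtype)
      = (f₀ ∘ₗ (range c).subtype) ∘ₗ c' := by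
    ext x
    change d ((ker d)ᗮ.orthogonalProjectionOnto (f₁ x)) = f₀ (c x)
    rw [d.apply_orthogonalProjectionOnto_orthogonal_ker]
    exact congr($hsq x)
  have hrank : finrank ℝ (ker c)ᗮ = finrank ℝ (ker d)ᗮ := by
    have := (LinearEquiv.ofBijective f₁ hf₁).finrank_eq
    have := (ker c).finrank_add_finrank_orthogonal
    have := (ker d).finrank_add_finrank_orthogonal
    have := map_ker_eq_ker_of_comp_eq hsq hf₁.surjective hf₀ ▸
      ((ker c).equivMapOfInjective f₁ hf₁.injective).finrank_eq
    omega
  rw [detPerp_eq_normDet, detPerp_eq_normDet, ← normDet_comp_of_finrank_eq _ _ hrank, hfactor,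
    normDet_comp_of_finrank_eq _ _ c.finrank_orthogonal_ker]
  exact congrArg _ (normDet_codRestrict _)

end Square

theorem alternating_finsum_telescope {p q a b : ℤ → ℝ} (hp : p.support.Finite)
    (hq : q.support.Finite) (ha : a.support.Finite) (hb : b.support.Finite)
    (h : ∀ n, q n + b n = a (n - 1) + p n) :
    -∑ᶠ n : ℤ, (-1 : ℝ) ^ n * q n - -∑ᶠ n : ℤ, (-1 : ℝ) ^ n * p n
      = ∑ᶠ n : ℤ, (-1 : ℝ) ^ n * (a n + b n) := by
  have hsupp {g : ℤ → ℝ} (hg : g.support.Finite) :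
      (fun n => (-1 : ℝ) ^ n * g n).support.Finite :=
    hg.subset (Function.support_mul_subset_right _ _)
  have hshift : ∑ᶠ n : ℤ, (-1 : ℝ) ^ (n - 1) * a (n - 1) = ∑ᶠ n : ℤ, (-1 : ℝ) ^ n * a n :=
    finsum_comp_equiv (Equiv.subRight (1 : ℤ)) (f := fun n => (-1 : ℝ) ^ n * a n)
  have hshift_supp : (fun n : ℤ => (-1 : ℝ) ^ (n - 1) * a (n - 1)).support.Finite :=
    (hsupp ha).preimage sub_left_injective.injOn
  calc -∑ᶠ n : ℤ, (-1 : ℝ) ^ n * q n - -∑ᶠ n : ℤ, (-1 : ℝ) ^ n * p n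
      = ∑ᶠ n : ℤ, ((-1 : ℝ) ^ n * p n - (-1 : ℝ) ^ n * q n) := by
        rw [finsum_sub_distrib (hsupp hp) (hsupp hq)]
        ring
    _ = ∑ᶠ n : ℤ, ((-1 : ℝ) ^ n * b n + (-1 : ℝ) ^ (n - 1) * a (n - 1)) := by
        refine finsum_congr fun n => ?_
        rw [zpow_sub_one₀ (by norm_num)]
        linear_combination (-(-1 : ℝ) ^ n) * h n
    _ = ∑ᶠ n : ℤ, (-1 : ℝ) ^ n * (a n + b n) := by
        rw [finsum_add_distrib (hsupp hb) hshift_supp, hshift,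
          ← finsum_add_distrib (hsupp hb) (hsupp ha)]
        exact finsum_congr fun n => by ring

theorem torsion_of_iso_of_contractible_general {C D : ℤ → Type*}
    [∀ n, NormedAddCommGroup (C n)] [∀ n, InnerProductSpace ℝ (C n)]
    [∀ n, FiniteDimensional ℝ (C n)]
    [∀ n, NormedAddCommGroup (D n)] [∀ n, InnerProductSpace ℝ (D n)]
    [∀ n, FiniteDimensional ℝ (D n)]
    (c : ∀ m n : ℤ, C m →ₗ[ℝ] C n)
    (hcc : ∀ n : ℤ, c (n + 1) n ∘ₗ c (n + 2) (n + 1) = 0)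
    (hcfin : {n : ℤ | ∃ x : C n, x ≠ 0}.Finite)
    (d : ∀ m n : ℤ, D m →ₗ[ℝ] D n)
    -- `C_*` is contractible
    (sC : ∀ m n : ℤ, C m →ₗ[ℝ] C n)
    (hsC : ∀ n : ℤ, (LinearMap.id : C n →ₗ[ℝ] C n)
      = c (n + 1) n ∘ₗ sC n (n + 1) + sC (n - 1) n ∘ₗ c n (n - 1))
    -- `f` is a chain map which is bijective in every degree
    (f : ∀ n : ℤ, C n →ₗ[ℝ] D n)
    (hf : ∀ n : ℤ, d (n + 1) n ∘ₗ f (n + 1) = f n ∘ₗ c (n + 1) n)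
    (hfbij : ∀ n : ℤ, Function.Bijective (f n)) :
    (- ∑ᶠ n : ℤ, ((-1 : ℝ) ^ n) * Real.log (detPerp (d n (n - 1))))
      - (- ∑ᶠ n : ℤ, ((-1 : ℝ) ^ n) * Real.log (detPerp (c n (n - 1))))
      = ∑ᶠ n : ℤ, ((-1 : ℝ) ^ n) * Real.log (detPerp (f n)) := by
  have hcomm n : d n (n - 1) ∘ₗ f n = f (n - 1) ∘ₗ c n (n - 1) := by
    have h := hf (n - 1)
    rwa [sub_add_cancel] at h
  have hexact n : range (c n (n - 1)) = ker (c (n - 1) (n - 1 - 1)) := by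
    have hcc' := hcc (n - 1 - 1)
    have hsC' := hsC (n - 1)
    rw [sub_add_cancel, show n - 1 - 1 + 2 = n by ring] at hcc'
    rw [sub_add_cancel] at hsC'
    exact range_eq_ker_of_id_eq_add hcc' hsC'
  let a n := (f n ∘ₗ (ker (c n (n - 1))).subtype).normDet
  let b n := ((ker (d n (n - 1)))ᗮ.orthogonalProjectionOnto.toLinearMap
    ∘ₗ f n ∘ₗ (ker (c n (n - 1)))ᗮ.subtype).normDet
  have hf_eq n : detPerp (f n) = a n * b n := by
    rw [detPerp_of_injective (hfbij n).injective]
    exact (f n).normDet_eq_mul_normDet_orthogonal (hfbij n)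
      (map_ker_eq_ker_of_comp_eq (hcomm n) (hfbij n).surjective (hfbij (n - 1)).injective)
  have hd_eq n : detPerp (d n (n - 1)) * b n = a (n - 1) * detPerp (c n (n - 1)) :=
    detPerp_mul_normDet_eq_normDet_mul_detPerp (hcomm n) (hfbij n) (hfbij (n - 1)).injective
      (hexact n)
  have hab n : a n ≠ 0 ∧ b n ≠ 0 := mul_ne_zero_iff.mp (hf_eq n ▸ (detPerp_pos _).ne')
  have htriv n (hn : n ∉ {n : ℤ | ∃ x : C n, x ≠ 0}) : Subsingleton (C n) :=
    subsingleton_of_forall_eq 0 fun x => by_contra fun hx => hn ⟨x, hx⟩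
  have hsupp (g : ℤ → ℝ) (hg : ∀ n, Subsingleton (C n) → g n = 1) :
      (fun n => log (g n)).support.Finite :=
    hcfin.subset fun n hn => by_contra fun hC => hn (by simp [hg n (htriv n hC)])
  rw [alternating_finsum_telescope (a := fun n => log (a n)) (b := fun n => log (b n))
    (hsupp _ fun n _ => detPerp_of_subsingleton _)
    (hsupp _ fun n _ => have := (hfbij n).surjective.subsingleton; detPerp_of_subsingleton _)
    (hsupp _ fun n _ => normDet_of_subsingleton _) (hsupp _ fun n _ => normDet_of_subsingleton _)
    fun n => by rw [← log_mul (detPerp_pos _).ne' (hab n).2,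
      ← log_mul (hab (n - 1)).1 (detPerp_pos _).ne', hd_eq n]]
  exact finsum_congr fun n => by rw [hf_eq n, log_mul (hab n).1 (hab n).2]

/-- Let `f_* : C_* → D_*` be a chain map of finite Hilbert chain complexes (differentials
`c m n`, `d m n`, vanishing unless `m = n + 1`), both contractible (a chain contraction
`s` with `id = c ∘ s + s ∘ c` exhibits chain homotopy equivalence with the zero complex),
and suppose `f n` is bijective for each `n`.  Then
`ρ(D_*) − ρ(C_*) = Σ_n (-1)^n · ln(det⊥(f_n))`, where
`ρ(C_*) = -Σ_n (-1)^n ln(det⊥(c_n))`. -/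
theorem torsion_of_iso_of_contractible {C D : ℤ → Type*}
    [∀ n, NormedAddCommGroup (C n)] [∀ n, InnerProductSpace ℝ (C n)]
    [∀ n, FiniteDimensional ℝ (C n)]
    [∀ n, NormedAddCommGroup (D n)] [∀ n, InnerProductSpace ℝ (D n)]
    [∀ n, FiniteDimensional ℝ (D n)]
    (c : ∀ m n : ℤ, C m →ₗ[ℝ] C n)
    (hcshape : ∀ m n : ℤ, m ≠ n + 1 → c m n = 0)
    (hcc : ∀ n : ℤ, c (n + 1) n ∘ₗ c (n + 2) (n + 1) = 0)
    (hcfin : {n : ℤ | ∃ x : C n, x ≠ 0}.Finite)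
    (d : ∀ m n : ℤ, D m →ₗ[ℝ] D n)
    (hdshape : ∀ m n : ℤ, m ≠ n + 1 → d m n = 0)
    (hdd : ∀ n : ℤ, d (n + 1) n ∘ₗ d (n + 2) (n + 1) = 0)
    (hdfin : {n : ℤ | ∃ x : D n, x ≠ 0}.Finite)
    -- `C_*` is contractible
    (sC : ∀ m n : ℤ, C m →ₗ[ℝ] C n)
    (hsCshape : ∀ m n : ℤ, n ≠ m + 1 → sC m n = 0)
    (hsC : ∀ n : ℤ, (LinearMap.id : C n →ₗ[ℝ] C n)
      = c (n + 1) n ∘ₗ sC n (n + 1) + sC (n - 1) n ∘ₗ c n (n - 1))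
    -- `D_*` is contractible
    (sD : ∀ m n : ℤ, D m →ₗ[ℝ] D n)
    (hsDshape : ∀ m n : ℤ, n ≠ m + 1 → sD m n = 0)
    (hsD : ∀ n : ℤ, (LinearMap.id : D n →ₗ[ℝ] D n)
      = d (n + 1) n ∘ₗ sD n (n + 1) + sD (n - 1) n ∘ₗ d n (n - 1))
    -- `f` is a chain map which is bijective in every degree
    (f : ∀ n : ℤ, C n →ₗ[ℝ] D n)
    (hf : ∀ n : ℤ, d (n + 1) n ∘ₗ f (n + 1) = f n ∘ₗ c (n + 1) n)
    (hfbij : ∀ n : ℤ, Function.Bijective (f n)) :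
    (- ∑ᶠ n : ℤ, ((-1 : ℝ) ^ n) * Real.log (detPerp (d n (n - 1))))
      - (- ∑ᶠ n : ℤ, ((-1 : ℝ) ^ n) * Real.log (detPerp (c n (n - 1))))
      = ∑ᶠ n : ℤ, ((-1 : ℝ) ^ n) * Real.log (detPerp (f n)) :=
  torsion_of_iso_of_contractible_general c hcc hcfin d sC hsC f hf hfbij
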